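/- Let p : ℝ^d → ℝ^m and q : ℝ^m → ℝ^s be polynomial maps with p(0) = 0 and q(0) = 0. Then M_{q∘p} = M_p ∘ M_q as linear maps from T(ℝ^s) to T(ℝ^d). -/

import Mathlib

noncomputable section

open MeasureTheory

/-- Words in the alphabet `{1,…,d}`. -/
abbrev Word (d : ℕ) := List (Fin d)

/-- `T(ℝ^d)`: the real vector space with basis the words in `{1,…,d}`. -/
abbrev Tens (d : ℕ) := Word d →₀ ℝ

namespace SigPaper

variable {d m s : ℕ}

/-- The basis word `w` as an element of `T(ℝ^d)`. -/
def wordT (w : Word d) : Tens d := Finsupp.single w 1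

/-- The shuffle product of two words. -/
def shuffleWord : Word d → Word d → Tens d
  | [], v => Finsupp.single v 1
  | u, [] => Finsupp.single u 1
  | a :: u, b :: v =>
      Finsupp.mapDomain (fun w => a :: w) (shuffleWord u (b :: v)) +
      Finsupp.mapDomain (fun w => b :: w) (shuffleWord (a :: u) v)
  termination_by u v => u.length + v.length
  decreasing_by all_goals simp +arith +decide

/-- The shuffle product `⧢` on `T(ℝ^d)`, the bilinear extension of the shuffle of words. -/
def shuffle (x y : Tens d) : Tens d :=
  x.sum fun u a => y.sum fun v b => (a * b) • shuffleWord u v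

/-- The operator appending the letter `i` at the end of every word (`T_i^+`). -/
def appendLetter (i : Fin d) (x : Tens d) : Tens d :=
  Finsupp.mapDomain (fun w => w ++ [i]) x

/-- The right half-shuffle of two words: `w ≻ (v∘i) = (w ⧢ v)∘i` (zero if the right word
is empty). -/
def halfShuffleWord (u v : Word d) : Tens d :=
  match v.getLast? with
  | none => 0
  | some i => appendLetter i (shuffleWord u v.dropLast)

/-- The right half-shuffle `≻`, extended bilinearly. -/
def halfShuffle (x y : Tens d) : Tens d :=
  x.sum fun u a => y.sum fun v b => (a * b) • halfShuffleWord u v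

/-- The letter-appending operator `T_i^+`. -/
def Tplus (i : Fin d) : Tens d → Tens d := appendLetter i

/-- `T_i^-` on a word: removes the last letter if it equals `i`, otherwise `0`. -/
def TminusWord (i : Fin d) (w : Word d) : Tens d :=
  match w.getLast? with
  | none => 0
  | some j => if j = i then Finsupp.single w.dropLast 1 else 0

/-- The letter-removing operator `T_i^-`. -/
def Tminus (i : Fin d) (x : Tens d) : Tens d := x.sum fun w a => a • TminusWord i w

/-- The single-letter word `i` in `T(ℝ^d)`. -/
def letterT (i : Fin d) : Tens d := Finsupp.single [i] 1

/-- Shuffle powers `x^{⧢ n}`. -/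
def shufflePow (x : Tens d) : ℕ → Tens d
  | 0 => Finsupp.single [] 1
  | n + 1 => shuffle (shufflePow x n) x

/-- Shuffle product of a list of elements. -/
def shuffleList : List (Tens d) → Tens d
  | [] => Finsupp.single [] 1
  | x :: xs => shuffle x (shuffleList xs)

/-- Image of the monomial `x^t` under `φ_d`: the shuffle product of its letters. -/
def phiMon (t : Fin d →₀ ℕ) : Tens d :=
  shuffleList ((List.finRange d).map fun i => shufflePow (letterT i) (t i))

/-- The embedding `φ_d : ℝ[x₁,…,x_d] → (T(ℝ^d), ⧢)` sending the monomial
`x_{i₁}⋯x_{i_l}` to `i₁ ⧢ ⋯ ⧢ i_l`. -/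
def phi (f : MvPolynomial (Fin d) ℝ) : Tens d :=
  f.support.sum fun t => f.coeff t • phiMon t

/-- A polynomial map `p : ℝ^d → ℝ^m`, given by `m` polynomials in `d` variables. -/
abbrev PolyMap (d m : ℕ) := Fin m → MvPolynomial (Fin d) ℝ

/-- `k_p^{ij} = φ_d(∂p_i/∂x_j) ∈ T(ℝ^d)`. -/
def kP (p : PolyMap d m) (i : Fin m) (j : Fin d) : Tens d :=
  phi (MvPolynomial.pderiv j (p i))

/-- Auxiliary: `M_p` on reversed words, so that `M_p(e) = e` and
`M_p(w∘i) = Σ_j (M_p(w) ⧢ k_p^{ij})∘j`. -/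
def MpRev (p : PolyMap d m) : List (Fin m) → Tens d
  | [] => Finsupp.single [] 1
  | i :: w => ∑ j : Fin d, appendLetter j (shuffle (MpRev p w) (kP p i j))

/-- `M_p` on a word. -/
def MpWord (p : PolyMap d m) (w : Word m) : Tens d := MpRev p w.reverse

/-- The linear map `M_p : T(ℝ^m) → T(ℝ^d)`. -/
def Mp (p : PolyMap d m) (x : Tens m) : Tens d := x.sum fun w a => a • MpWord p w

/-- `X : [0,L] → ℝ^d` is piecewise continuously differentiable: there is a partition
`0 = t₀ ≤ t₁ ≤ ⋯ ≤ t_n = L` such that `X` is `C¹` on each subinterval. -/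
def PiecewiseC1 (X : ℝ → Fin d → ℝ) (L : ℝ) : Prop :=
  ∃ (n : ℕ) (t : Fin (n + 1) → ℝ), Monotone t ∧ t 0 = 0 ∧ t (Fin.last n) = L ∧
    ∀ k : Fin n, ContDiffOn ℝ 1 X (Set.Icc (t k.castSucc) (t k.succ))

/-- Iterated-integral signature coefficients, on reversed words:
`⟨σ(X|_{[0,t]}), w∘i⟩ = ∫_0^t ⟨σ(X|_{[0,r]}), w⟩ Ẋ^i_r dr`. -/
def sigRev (X : ℝ → Fin d → ℝ) : List (Fin d) → ℝ → ℝ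
  | [], _ => 1
  | i :: w, t => ∫ r in (0:ℝ)..t, sigRev X w r * deriv (fun u => X u i) r

/-- `⟨σ(X|_{[0,L]}), w⟩`, the signature coefficient of the word `w`. -/
def sigWord (X : ℝ → Fin d → ℝ) (L : ℝ) (w : Word d) : ℝ := sigRev X w.reverse L

/-- The pairing `⟨σ(X|_{[0,L]}), x⟩` for `x ∈ T(ℝ^d)`. -/
def sigT (X : ℝ → Fin d → ℝ) (L : ℝ) (x : Tens d) : ℝ :=
  x.sum fun w a => a * sigWord X L w

/-- The transformed path `p(X) : t ↦ p(X(t))`. -/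
def pPath (p : PolyMap d m) (X : ℝ → Fin d → ℝ) : ℝ → Fin m → ℝ :=
  fun t i => MvPolynomial.eval (X t) (p i)

/-- The translated polynomial map `p̃(y) = p(y + x₀) − p(x₀)`, satisfying `p̃(0) = 0`. -/
def ptilde (p : PolyMap d m) (x0 : Fin d → ℝ) : PolyMap d m := fun i =>
  MvPolynomial.aeval (fun j => MvPolynomial.X j + MvPolynomial.C (x0 j)) (p i) -
    MvPolynomial.C (MvPolynomial.eval x0 (p i))

/-- The pairing `⟨exp_∘(L·𝟙), x⟩` for `x ∈ T(ℝ¹)`: the coefficient of the word of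
length `n` in `exp_∘(L·𝟙)` is `Lⁿ/n!`. -/
def expPair (L : ℝ) (x : Tens 1) : ℝ :=
  x.sum fun w a => a * (L ^ w.length / (w.length.factorial : ℝ))

/-- The pairing `⟨σ(X) ∘ σ(Y), x⟩` of the concatenation product of two signatures with
`x ∈ T(ℝ^d)`: on a word `w` it is `Σ_{u∘v = w} ⟨σ(X), u⟩·⟨σ(Y), v⟩`. -/
def concatPair (X Y : ℝ → Fin d → ℝ) (L : ℝ) (x : Tens d) : ℝ :=
  x.sum fun w a =>
    a * ∑ k ∈ Finset.range (w.length + 1), sigWord X L (w.take k) * sigWord Y L (w.drop k)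

/-!
`M_p` is a morphism of shuffle algebras. A tensor is determined by its constant term together
with its images under the letter-removing maps `T_j^-`; these are derivations of `⧢`, and
`T_j^- (M_p (w∘i)) = M_p(w) ⧢ k_p^{ij}`, so the two sides of
`M_p(x ⧢ y) = M_p(x) ⧢ M_p(y)` can be compared by induction on length. Since also `T_j^- ∘ φ = φ ∘ ∂_j`, the condition `p(0) = 0`
gives `M_p(i) = φ(p_i)`, hence `M_p ∘ φ = φ ∘ p^*` with `p^* f = f ∘ p`. By the chain rule,
`k_{q∘p}^{ij} = Σ_l M_p(k_q^{il}) ⧢ k_p^{lj}`, and induction on the length of words gives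
`M_{q∘p} = M_p ∘ M_q`.
-/

open Finsupp

section AppendLetter

theorem appendLetter_single (j : Fin d) (w : Word d) (c : ℝ) :
    appendLetter j (single w c) = single (w ++ [j]) c :=
  mapDomain_single

theorem single_concat (u : Word d) (a : Fin d) (c : ℝ) :
    single (u ++ [a]) c = appendLetter a (single u c) :=
  (appendLetter_single a u c).symm

theorem letterT_eq_appendLetter (i : Fin d) : letterT i = appendLetter i (single [] 1) := by
  rw [appendLetter_single]
  rfl

theorem appendLetter_add (j : Fin d) (x y : Tens d) :
    appendLetter j (x + y) = appendLetter j x + appendLetter j y :=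
  mapDomain_add

theorem appendLetter_smul (j : Fin d) (c : ℝ) (x : Tens d) :
    appendLetter j (c • x) = c • appendLetter j x :=
  mapDomain_smul c x

theorem appendLetter_sum {ι : Type*} (j : Fin d) (t : Finset ι) (f : ι → Tens d) :
    appendLetter j (∑ i ∈ t, f i) = ∑ i ∈ t, appendLetter j (f i) :=
  mapDomain_finsetSum

theorem appendLetter_apply_nil (i : Fin d) (x : Tens d) : appendLetter i x [] = 0 :=
  mapDomain_of_notMem_range x [] (by simp)

theorem sum_appendLetter_apply_nil (X : Fin d → Tens d) :
    (∑ i, appendLetter i (X i)) [] = 0 := by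
  simp [finsetSum_apply, appendLetter_apply_nil]

theorem mapDomain_cons_appendLetter (a j : Fin d) (x : Tens d) :
    mapDomain (a :: ·) (appendLetter j x) = appendLetter j (mapDomain (a :: ·) x) := by
  simp only [appendLetter, ← mapDomain_comp]
  rfl

end AppendLetter

section ShuffleWord

theorem shuffleWord_nil_left (v : Word d) : shuffleWord [] v = single v 1 := by
  cases v <;> simp [shuffleWord]

theorem shuffleWord_nil_right (u : Word d) : shuffleWord u [] = single u 1 := by
  cases u <;> simp [shuffleWord]

theorem shuffleWord_cons_cons (a b : Fin d) (u v : Word d) :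
    shuffleWord (a :: u) (b :: v) =
      mapDomain (a :: ·) (shuffleWord u (b :: v)) +
        mapDomain (b :: ·) (shuffleWord (a :: u) v) := by
  rw [shuffleWord]

theorem shuffleWord_comm : ∀ u v : Word d, shuffleWord u v = shuffleWord v u
  | [], v => by rw [shuffleWord_nil_left, shuffleWord_nil_right]
  | a :: u, [] => by rw [shuffleWord_nil_left, shuffleWord_nil_right]
  | a :: u, b :: v => by
    rw [shuffleWord_cons_cons, shuffleWord_cons_cons b a, shuffleWord_comm u,
      shuffleWord_comm _ v, add_comm]
  termination_by u v => u.length + v.length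
  decreasing_by all_goals simp +arith

theorem shuffleWord_concat_concat : ∀ (u v : Word d) (a b : Fin d),
    shuffleWord (u ++ [a]) (v ++ [b]) =
      appendLetter a (shuffleWord u (v ++ [b])) + appendLetter b (shuffleWord (u ++ [a]) v)
  | [], [], a, b => by
    simp [shuffleWord_cons_cons, shuffleWord_nil_left, shuffleWord_nil_right,
      appendLetter_single, add_comm]
  | [], c :: v, a, b => by
    have ih := shuffleWord_concat_concat [] v a b
    simp only [List.nil_append] at ih
    simp only [List.nil_append, List.cons_append, shuffleWord_cons_cons, shuffleWord_nil_left,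
      ih, mapDomain_add, mapDomain_single, appendLetter_add, appendLetter_single,
      mapDomain_cons_appendLetter]
    abel
  | c :: u, [], a, b => by
    have ih := shuffleWord_concat_concat u [] a b
    simp only [List.nil_append] at ih
    simp only [List.nil_append, List.cons_append, shuffleWord_cons_cons, shuffleWord_nil_right,
      ih, mapDomain_add, mapDomain_single, appendLetter_add, appendLetter_single,
      mapDomain_cons_appendLetter]
    abel
  | c :: u, e :: v, a, b => by
    have ih₁ := shuffleWord_concat_concat u (e :: v) a b
    have ih₂ := shuffleWord_concat_concat (c :: u) v a b
    simp only [List.cons_append] at ih₁ ih₂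
    simp only [List.cons_append, shuffleWord_cons_cons, ih₁, ih₂, mapDomain_add,
      appendLetter_add, mapDomain_cons_appendLetter]
    abel
  termination_by u v => u.length + v.length
  decreasing_by all_goals simp +arith

theorem shuffleWord_apply_nil (u v : Word d) :
    shuffleWord u v [] = single u (1 : ℝ) [] * single v (1 : ℝ) [] := by
  rcases u with _ | ⟨a, u⟩
  · simp [shuffleWord_nil_left]
  rcases v with _ | ⟨b, v⟩
  · simp [shuffleWord_nil_right]
  simp [shuffleWord_cons_cons, mapDomain_of_notMem_range]

end ShuffleWord

section Shuffle

def shuffleBilin : Tens d →ₗ[ℝ] Tens d →ₗ[ℝ] Tens d :=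
  linearCombination ℝ fun u => linearCombination ℝ (shuffleWord u)

theorem shuffleBilin_apply (x y : Tens d) : shuffleBilin x y = shuffle x y := by
  simp only [shuffleBilin, linearCombination_apply, LinearMap.finsupp_sum_apply,
    LinearMap.smul_apply, shuffle, smul_sum, mul_smul]

@[simp] theorem shuffle_add_left (x y z : Tens d) :
    shuffle (x + y) z = shuffle x z + shuffle y z := by
  simp only [← shuffleBilin_apply, map_add, LinearMap.add_apply]

@[simp] theorem shuffle_add_right (x y z : Tens d) :
    shuffle x (y + z) = shuffle x y + shuffle x z := by
  simp only [← shuffleBilin_apply, map_add]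

@[simp] theorem shuffle_smul_left (c : ℝ) (x y : Tens d) :
    shuffle (c • x) y = c • shuffle x y := by
  simp only [← shuffleBilin_apply, map_smul, LinearMap.smul_apply]

@[simp] theorem shuffle_smul_right (c : ℝ) (x y : Tens d) :
    shuffle x (c • y) = c • shuffle x y := by
  simp only [← shuffleBilin_apply, map_smul]

@[simp] theorem shuffle_zero_left (y : Tens d) : shuffle 0 y = 0 := by
  simp only [← shuffleBilin_apply, map_zero, LinearMap.zero_apply]

@[simp] theorem shuffle_zero_right (x : Tens d) : shuffle x 0 = 0 := by
  simp only [← shuffleBilin_apply, map_zero]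

theorem shuffle_sum_right {ι : Type*} (t : Finset ι) (f : ι → Tens d) (x : Tens d) :
    shuffle x (∑ i ∈ t, f i) = ∑ i ∈ t, shuffle x (f i) := by
  simp only [← shuffleBilin_apply, map_sum]

theorem shuffle_single_single (u v : Word d) (a b : ℝ) :
    shuffle (single u a) (single v b) = (a * b) • shuffleWord u v := by
  simp only [← shuffleBilin_apply, shuffleBilin, linearCombination_single, LinearMap.smul_apply,
    mul_smul, smul_comm a b]

theorem single_nil_shuffle (x : Tens d) : shuffle (single [] 1) x = x := by
  induction x using Finsupp.induction_linear with
  | zero => simp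
  | add x y hx hy => simp [hx, hy]
  | single v c => simp [shuffle_single_single, shuffleWord_nil_left]

theorem shuffle_comm (x y : Tens d) : shuffle x y = shuffle y x := by
  unfold shuffle
  rw [Finsupp.sum_comm]
  simp only [mul_comm, shuffleWord_comm]

theorem shuffle_single_nil (x : Tens d) : shuffle x (single [] 1) = x := by
  rw [shuffle_comm, single_nil_shuffle]

theorem shuffle_mapDomain_cons_cons (a b : Fin d) (x y : Tens d) :
    shuffle (mapDomain (a :: ·) x) (mapDomain (b :: ·) y) =
      mapDomain (a :: ·) (shuffle x (mapDomain (b :: ·) y)) +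
        mapDomain (b :: ·) (shuffle (mapDomain (a :: ·) x) y) := by
  induction x using Finsupp.induction_linear with
  | zero => simp
  | add x x' hx hx' => simp only [mapDomain_add, shuffle_add_left, hx, hx']; abel
  | single u r =>
    induction y using Finsupp.induction_linear with
    | zero => simp
    | add y y' hy hy' => simp only [mapDomain_add, shuffle_add_right, hy, hy']; abel
    | single v t =>
      simp only [mapDomain_single, shuffle_single_single, shuffleWord_cons_cons, smul_add,
        mapDomain_smul]

theorem shuffle_shuffleWord_single : ∀ u v w : Word d,
    shuffle (shuffleWord u v) (single w 1) = shuffle (single u 1) (shuffleWord v w)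
  | [], v, w => by
    rw [shuffleWord_nil_left, shuffle_single_single, single_nil_shuffle, one_mul, one_smul]
  | a :: u, [], w => by
    rw [shuffleWord_nil_right, shuffleWord_nil_left, shuffle_single_single]
  | a :: u, b :: v, [] => by
    rw [shuffle_single_nil, shuffleWord_nil_right, shuffle_single_single, one_mul, one_smul]
  | a :: u, b :: v, c :: w => by
    have ih₁ := shuffle_shuffleWord_single u (b :: v) (c :: w)
    have ih₂ := shuffle_shuffleWord_single (a :: u) v (c :: w)
    have ih₃ := shuffle_shuffleWord_single (a :: u) (b :: v) w
    simp only [← mapDomain_single (f := (· :: ·) _), shuffleWord_cons_cons, shuffle_add_left,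
      shuffle_add_right, shuffle_mapDomain_cons_cons] at ih₁ ih₂ ih₃ ⊢
    rw [ih₁, ih₂, ← ih₃]
    simp only [mapDomain_add]
    abel
  termination_by u v w => u.length + v.length + w.length
  decreasing_by all_goals simp +arith

theorem shuffle_assoc (x y z : Tens d) :
    shuffle (shuffle x y) z = shuffle x (shuffle y z) := by
  induction x using Finsupp.induction_linear with
  | zero => simp
  | add x x' hx hx' => simp [hx, hx']
  | single u r =>
    induction y using Finsupp.induction_linear with
    | zero => simp
    | add y y' hy hy' => simp [hy, hy']
    | single v t =>
      induction z using Finsupp.induction_linear with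
      | zero => simp
      | add z z' hz hz' => simp [hz, hz']
      | single w c =>
        rw [← smul_single_one u r, ← smul_single_one w c]
        simp only [shuffle_single_single, shuffle_smul_left, shuffle_smul_right,
          shuffle_shuffleWord_single, smul_smul]
        ring_nf

theorem shuffle_shuffle_shuffle_comm (x y z w : Tens d) :
    shuffle (shuffle x y) (shuffle z w) = shuffle (shuffle x z) (shuffle y w) := by
  rw [shuffle_assoc, shuffle_assoc, ← shuffle_assoc y, shuffle_comm y z, shuffle_assoc z]

theorem shuffle_apply_nil (x y : Tens d) : shuffle x y [] = x [] * y [] := by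
  induction x using Finsupp.induction_linear with
  | zero => simp
  | add x x' hx hx' => simp [hx, hx', add_mul]
  | single u r =>
    induction y using Finsupp.induction_linear with
    | zero => simp
    | add y y' hy hy' => simp [hy, hy', mul_add]
    | single v t =>
      rw [← smul_single_one u r, ← smul_single_one v t]
      simp only [shuffle_smul_left, shuffle_smul_right, shuffle_single_single,
        Finsupp.smul_apply, shuffleWord_apply_nil, smul_eq_mul]
      ring

end Shuffle

section Tminus

theorem Tminus_eq_linearCombination (j : Fin d) (x : Tens d) :
    Tminus j x = linearCombination ℝ (TminusWord j) x :=
  (linearCombination_apply ℝ x).symm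

@[simp] theorem Tminus_add (j : Fin d) (x y : Tens d) :
    Tminus j (x + y) = Tminus j x + Tminus j y := by
  simp only [Tminus_eq_linearCombination, map_add]

@[simp] theorem Tminus_smul (j : Fin d) (c : ℝ) (x : Tens d) :
    Tminus j (c • x) = c • Tminus j x := by
  simp only [Tminus_eq_linearCombination, map_smul]

@[simp] theorem Tminus_zero (j : Fin d) : Tminus j (0 : Tens d) = 0 := by
  simp only [Tminus_eq_linearCombination, map_zero]

theorem Tminus_sum {ι : Type*} (j : Fin d) (t : Finset ι) (f : ι → Tens d) :
    Tminus j (∑ i ∈ t, f i) = ∑ i ∈ t, Tminus j (f i) := by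
  simp only [Tminus_eq_linearCombination, map_sum]

theorem TminusWord_apply (j : Fin d) (w u : Word d) :
    TminusWord j w u = single (u ++ [j]) (1 : ℝ) w := by
  rcases List.eq_nil_or_concat' w with rfl | ⟨v, b, rfl⟩
  · simp [TminusWord]
  · by_cases hb : b = j
    · subst hb
      simp [TminusWord, single_apply, eq_comm]
    · simp [TminusWord, hb]

theorem Tminus_apply (j : Fin d) (x : Tens d) (u : Word d) : Tminus j x u = x (u ++ [j]) := by
  induction x using Finsupp.induction_linear with
  | zero => simp
  | add x y hx hy => simp [hx, hy]
  | single w c => simp [Tminus_eq_linearCombination, TminusWord_apply, single_apply, eq_comm]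

theorem ext_Tminus {x y : Tens d} (h₀ : x [] = y []) (h : ∀ j, Tminus j x = Tminus j y) :
    x = y := by
  ext w
  induction w using List.reverseRecOn with
  | nil => exact h₀
  | append_singleton u j _ => simpa only [Tminus_apply] using DFunLike.congr_fun (h j) u

theorem Tminus_single_nil (j : Fin d) (c : ℝ) : Tminus j (single ([] : Word d) c) = 0 := by
  ext u
  simp [Tminus_apply]

theorem Tminus_appendLetter (j i : Fin d) (x : Tens d) :
    Tminus j (appendLetter i x) = if i = j then x else 0 := by
  ext u
  rw [Tminus_apply, appendLetter]
  split_ifs with hij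
  · subst hij
    exact mapDomain_apply (fun _ _ => List.append_cancel_right) x u
  · refine mapDomain_of_notMem_range x _ ?_
    simpa using hij

theorem Tminus_sum_appendLetter (j : Fin d) (X : Fin d → Tens d) :
    Tminus j (∑ i, appendLetter i (X i)) = X j := by
  simp [Tminus_sum, Tminus_appendLetter]

theorem apply_nil_smul_add_sum_appendLetter_Tminus (x : Tens d) :
    x [] • single [] 1 + ∑ j, appendLetter j (Tminus j x) = x :=
  ext_Tminus (by simp [appendLetter_apply_nil])
    (fun j => by simp [Tminus_single_nil, Tminus_sum_appendLetter])

theorem Tminus_shuffle_single (j : Fin d) (u v : Word d) :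
    Tminus j (shuffle (single u 1) (single v 1)) =
      shuffle (Tminus j (single u 1)) (single v 1) +
        shuffle (single u 1) (Tminus j (single v 1)) := by
  rcases List.eq_nil_or_concat' u with rfl | ⟨u, a, rfl⟩
  · simp [single_nil_shuffle, Tminus_single_nil]
  rcases List.eq_nil_or_concat' v with rfl | ⟨v, b, rfl⟩
  · simp [shuffle_single_nil, Tminus_single_nil]
  rw [shuffle_single_single, one_mul, one_smul, shuffleWord_concat_concat, Tminus_add,
    Tminus_appendLetter, Tminus_appendLetter, single_concat u, single_concat v,
    Tminus_appendLetter, Tminus_appendLetter, ← single_concat, ← single_concat]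
  split_ifs <;> simp [shuffle_single_single]

theorem Tminus_shuffle (j : Fin d) (x y : Tens d) :
    Tminus j (shuffle x y) = shuffle (Tminus j x) y + shuffle x (Tminus j y) := by
  induction x using Finsupp.induction_linear with
  | zero => simp
  | add x x' hx hx' => simp only [shuffle_add_left, Tminus_add, hx, hx']; abel
  | single u r =>
    induction y using Finsupp.induction_linear with
    | zero => simp
    | add y y' hy hy' => simp only [shuffle_add_right, Tminus_add, hy, hy']; abel
    | single v t =>
      rw [← smul_single_one u r, ← smul_single_one v t]
      simp only [shuffle_smul_left, shuffle_smul_right, Tminus_smul, Tminus_shuffle_single,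
        smul_add]

end Tminus

section Mp

variable (p : PolyMap d m)

theorem Mp_eq_linearCombination (x : Tens m) : Mp p x = linearCombination ℝ (MpWord p) x :=
  (linearCombination_apply ℝ x).symm

@[simp] theorem Mp_add (x y : Tens m) : Mp p (x + y) = Mp p x + Mp p y := by
  simp only [Mp_eq_linearCombination, map_add]

@[simp] theorem Mp_smul (c : ℝ) (x : Tens m) : Mp p (c • x) = c • Mp p x := by
  simp only [Mp_eq_linearCombination, map_smul]

@[simp] theorem Mp_zero : Mp p (0 : Tens m) = 0 := by
  simp only [Mp_eq_linearCombination, map_zero]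

theorem Mp_sum {ι : Type*} (t : Finset ι) (f : ι → Tens m) :
    Mp p (∑ i ∈ t, f i) = ∑ i ∈ t, Mp p (f i) := by
  simp only [Mp_eq_linearCombination, map_sum]

theorem Mp_single (w : Word m) (c : ℝ) : Mp p (single w c) = c • MpWord p w := by
  simp only [Mp_eq_linearCombination, linearCombination_single]

theorem MpWord_nil : MpWord p [] = single [] 1 := rfl

theorem Mp_single_nil : Mp p (single [] 1) = single [] 1 := by
  rw [Mp_single, MpWord_nil, one_smul]

theorem MpWord_concat (w : Word m) (i : Fin m) :
    MpWord p (w ++ [i]) = ∑ j, appendLetter j (shuffle (MpWord p w) (kP p i j)) := by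
  rw [MpWord, List.reverse_append]
  rfl

theorem Tminus_MpWord_concat (j : Fin d) (w : Word m) (i : Fin m) :
    Tminus j (MpWord p (w ++ [i])) = shuffle (MpWord p w) (kP p i j) := by
  rw [MpWord_concat, Tminus_sum_appendLetter]

theorem Mp_appendLetter (i : Fin m) (x : Tens m) :
    Mp p (appendLetter i x) = ∑ j, appendLetter j (shuffle (Mp p x) (kP p i j)) := by
  induction x using Finsupp.induction_linear with
  | zero => simp [appendLetter]
  | add x y hx hy =>
    simp only [appendLetter_add, Mp_add, hx, hy, shuffle_add_left, ← Finset.sum_add_distrib]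
  | single w c =>
    simp only [appendLetter_single, Mp_single, MpWord_concat, Finset.smul_sum,
      shuffle_smul_left, appendLetter_smul]

theorem Mp_shuffleWord (u v : Word m) :
    Mp p (shuffleWord u v) = shuffle (MpWord p u) (MpWord p v) := by
  rcases List.eq_nil_or_concat' u with rfl | ⟨u, a, rfl⟩
  · rw [shuffleWord_nil_left, Mp_single, one_smul, MpWord_nil, single_nil_shuffle]
  rcases List.eq_nil_or_concat' v with rfl | ⟨v, b, rfl⟩
  · rw [shuffleWord_nil_right, Mp_single, one_smul, MpWord_nil, shuffle_single_nil]
  rw [shuffleWord_concat_concat, Mp_add, Mp_appendLetter, Mp_appendLetter, Mp_shuffleWord u,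
    Mp_shuffleWord _ v]
  refine ext_Tminus ?_ fun j => ?_
  · rw [Finsupp.add_apply, sum_appendLetter_apply_nil, sum_appendLetter_apply_nil,
      shuffle_apply_nil, MpWord_concat, sum_appendLetter_apply_nil, zero_mul, add_zero]
  · rw [Tminus_add, Tminus_sum_appendLetter, Tminus_sum_appendLetter, Tminus_shuffle,
      Tminus_MpWord_concat, Tminus_MpWord_concat, shuffle_assoc, shuffle_assoc, shuffle_assoc,
      shuffle_comm (MpWord p (v ++ [b])) (kP p a j)]
termination_by u.length + v.length
decreasing_by all_goals subst_vars; simp +arith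

theorem Mp_shuffle (x y : Tens m) : Mp p (shuffle x y) = shuffle (Mp p x) (Mp p y) := by
  induction x using Finsupp.induction_linear with
  | zero => simp
  | add x x' hx hx' => simp [hx, hx']
  | single u r =>
    induction y using Finsupp.induction_linear with
    | zero => simp
    | add y y' hy hy' => simp [hy, hy']
    | single v t =>
      simp only [shuffle_single_single, Mp_smul, Mp_shuffleWord, Mp_single, shuffle_smul_left,
        shuffle_smul_right, smul_smul, mul_comm r t]

end Mp

section ShuffleList

theorem shufflePow_add (x : Tens d) (k n : ℕ) :
    shufflePow x (k + n) = shuffle (shufflePow x k) (shufflePow x n) := by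
  induction n with
  | zero => rw [Nat.add_zero, shufflePow, shuffle_single_nil]
  | succ n ih => rw [← Nat.add_assoc, shufflePow, shufflePow, ih, shuffle_assoc]

theorem shuffleList_map_shuffle {ι : Type*} (f g : ι → Tens d) (l : List ι) :
    shuffleList (l.map fun i => shuffle (f i) (g i)) =
      shuffle (shuffleList (l.map f)) (shuffleList (l.map g)) := by
  induction l with
  | nil => simp [shuffleList, single_nil_shuffle]
  | cons a l ih => simp only [List.map_cons, shuffleList, ih, shuffle_shuffle_shuffle_comm]

theorem shuffleList_map_of_forall_eq_single_nil {ι : Type*} {f : ι → Tens d} {l : List ι}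
    (h : ∀ j ∈ l, f j = single [] 1) : shuffleList (l.map f) = single [] 1 := by
  induction l with
  | nil => rfl
  | cons a l ih =>
    rw [List.map_cons, shuffleList, h a List.mem_cons_self,
      ih fun j hj => h j (List.mem_cons_of_mem a hj), single_nil_shuffle]

theorem shuffleList_map_of_nodup {ι : Type*} {f : ι → Tens d} {l : List ι} {i : ι}
    (hl : l.Nodup) (hi : i ∈ l) (h : ∀ j ∈ l, j ≠ i → f j = single [] 1) :
    shuffleList (l.map f) = f i := by
  induction l with
  | nil => cases hi
  | cons a l ih =>
    obtain ⟨ha, hl⟩ := List.nodup_cons.mp hl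
    rw [List.map_cons, shuffleList]
    by_cases hai : a = i
    · subst hai
      rw [shuffleList_map_of_forall_eq_single_nil fun j hj =>
          h j (List.mem_cons_of_mem _ hj) (ne_of_mem_of_not_mem hj ha), shuffle_single_nil]
    · rw [h a List.mem_cons_self hai, single_nil_shuffle,
        ih hl ((List.mem_cons.mp hi).resolve_left (Ne.symm hai))
          fun j hj => h j (List.mem_cons_of_mem a hj)]

end ShuffleList

section Phi

theorem phi_eq_constr (f : MvPolynomial (Fin d) ℝ) :
    phi f = (MvPolynomial.basisMonomials (Fin d) ℝ).constr ℝ phiMon f := by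
  rw [Module.Basis.constr_apply]
  rfl

@[simp] theorem phi_add (f g : MvPolynomial (Fin d) ℝ) : phi (f + g) = phi f + phi g := by
  simp only [phi_eq_constr, map_add]

@[simp] theorem phi_zero : phi (0 : MvPolynomial (Fin d) ℝ) = 0 := by
  simp only [phi_eq_constr, map_zero]

theorem phi_sum {ι : Type*} (t : Finset ι) (f : ι → MvPolynomial (Fin d) ℝ) :
    phi (∑ i ∈ t, f i) = ∑ i ∈ t, phi (f i) := by
  simp only [phi_eq_constr, map_sum]

theorem phi_monomial (t : Fin d →₀ ℕ) (c : ℝ) :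
    phi (MvPolynomial.monomial t c) = c • phiMon t := by
  rw [phi_eq_constr, ← mul_one c, ← smul_eq_mul, ← MvPolynomial.smul_monomial, map_smul,
    smul_eq_mul, mul_one]
  congr 1
  simpa using (MvPolynomial.basisMonomials (Fin d) ℝ).constr_basis ℝ phiMon t

theorem phiMon_add (t t' : Fin d →₀ ℕ) :
    phiMon (t + t') = shuffle (phiMon t) (phiMon t') := by
  simp only [phiMon, ← shuffleList_map_shuffle, ← shufflePow_add, Finsupp.add_apply]

theorem phiMon_zero : phiMon (0 : Fin d →₀ ℕ) = single [] 1 :=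
  shuffleList_map_of_forall_eq_single_nil fun _ _ => rfl

theorem phiMon_single (i : Fin d) (n : ℕ) :
    phiMon (Finsupp.single i n) = shufflePow (letterT i) n := by
  rw [phiMon, shuffleList_map_of_nodup (List.nodup_finRange d) (List.mem_finRange i)
    fun j _ hj => by rw [Finsupp.single_eq_of_ne hj, shufflePow], Finsupp.single_eq_same]

theorem phi_mul (f g : MvPolynomial (Fin d) ℝ) : phi (f * g) = shuffle (phi f) (phi g) := by
  induction f using MvPolynomial.induction_on' with
  | add f f' hf hf' => rw [add_mul, phi_add, hf, hf', phi_add, shuffle_add_left]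
  | monomial t a =>
    induction g using MvPolynomial.induction_on' with
    | add g g' hg hg' => rw [mul_add, phi_add, hg, hg', phi_add, shuffle_add_right]
    | monomial t' b =>
      rw [MvPolynomial.monomial_mul, phi_monomial, phi_monomial, phi_monomial, phiMon_add,
        shuffle_smul_left, shuffle_smul_right, smul_smul]

theorem phi_C (a : ℝ) :
    phi (MvPolynomial.C a : MvPolynomial (Fin d) ℝ) = a • single [] 1 := by
  rw [← MvPolynomial.monomial_zero', phi_monomial, phiMon_zero]

theorem phi_one : phi (1 : MvPolynomial (Fin d) ℝ) = single [] 1 := by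
  rw [← MvPolynomial.C_1, phi_C, one_smul]

theorem phi_X (i : Fin d) : phi (MvPolynomial.X i : MvPolynomial (Fin d) ℝ) = letterT i := by
  rw [MvPolynomial.X, phi_monomial, phiMon_single, one_smul, shufflePow, shufflePow,
    single_nil_shuffle]

theorem phi_apply_nil (f : MvPolynomial (Fin d) ℝ) : phi f [] = MvPolynomial.eval 0 f := by
  induction f using MvPolynomial.induction_on with
  | C a => simp [phi_C]
  | add f g hf hg => simp [hf, hg]
  | mul_X f i hf =>
    simp [phi_mul, phi_X, shuffle_apply_nil, letterT_eq_appendLetter, appendLetter_apply_nil]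

theorem Tminus_phi (j : Fin d) (f : MvPolynomial (Fin d) ℝ) :
    Tminus j (phi f) = phi (MvPolynomial.pderiv j f) := by
  induction f using MvPolynomial.induction_on with
  | C a => simp [phi_C, Tminus_single_nil]
  | add f g hf hg => simp [hf, hg]
  | mul_X f i hf =>
    rw [phi_mul, phi_X, Tminus_shuffle, hf, letterT_eq_appendLetter, Tminus_appendLetter,
      MvPolynomial.pderiv_mul, MvPolynomial.pderiv_X, phi_add, phi_mul, phi_mul, phi_X,
      letterT_eq_appendLetter, Pi.single_apply]
    split_ifs <;> simp [phi_one, shuffle_single_nil]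

end Phi

open MvPolynomial in
theorem pderiv_bind₁ {σ τ R : Type*} [CommSemiring R] [Fintype σ]
    (p : σ → MvPolynomial τ R) (f : MvPolynomial σ R) (j : τ) :
    pderiv j (bind₁ p f) = ∑ l, bind₁ p (pderiv l f) * pderiv j (p l) := by
  classical
  induction f using MvPolynomial.induction_on with
  | C a => simp
  | add f g hf hg => simp [hf, hg, add_mul, Finset.sum_add_distrib]
  | mul_X f i hf =>
    simp only [map_mul, bind₁_X_right, pderiv_mul, hf, pderiv_X, Pi.single_apply, map_add,
      mul_ite, mul_one, mul_zero, apply_ite (bind₁ p), map_zero, add_mul, ite_mul, zero_mul,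
      Finset.sum_add_distrib, Finset.sum_mul, Finset.sum_ite_eq, Finset.mem_univ, if_true]
    exact congrArg (· + _) (Finset.sum_congr rfl fun l _ => mul_right_comm _ _ _)

section Composition

variable (p : PolyMap d m)

theorem Mp_letterT (i : Fin m) (hpi : MvPolynomial.eval 0 (p i) = 0) :
    Mp p (letterT i) = phi (p i) := by
  rw [letterT_eq_appendLetter, Mp_appendLetter, Mp_single_nil]
  simp only [single_nil_shuffle, kP, ← Tminus_phi]
  conv_rhs => rw [← apply_nil_smul_add_sum_appendLetter_Tminus (phi (p i))]
  rw [phi_apply_nil, hpi, zero_smul, zero_add]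

theorem Mp_phi (hp : ∀ i, MvPolynomial.eval 0 (p i) = 0) (f : MvPolynomial (Fin m) ℝ) :
    Mp p (phi f) = phi (MvPolynomial.bind₁ p f) := by
  induction f using MvPolynomial.induction_on with
  | C a => rw [MvPolynomial.bind₁_C_right, phi_C, Mp_smul, Mp_single_nil, phi_C]
  | add f g hf hg => simp [hf, hg]
  | mul_X f i hf =>
    rw [phi_mul, phi_X, Mp_shuffle, hf, Mp_letterT p i (hp i), map_mul,
      MvPolynomial.bind₁_X_right, phi_mul]

variable (q : PolyMap m s)

theorem kP_bind₁ (hp : ∀ i, MvPolynomial.eval 0 (p i) = 0) (i : Fin s) (j : Fin d) :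
    kP (fun l => MvPolynomial.bind₁ p (q l)) i j =
      ∑ l, shuffle (Mp p (kP q i l)) (kP p l j) := by
  simp only [kP, pderiv_bind₁, phi_sum, phi_mul, Mp_phi p hp]

theorem MpWord_bind₁ (hp : ∀ i, MvPolynomial.eval 0 (p i) = 0) (w : Word s) :
    MpWord (fun l => MvPolynomial.bind₁ p (q l)) w = Mp p (MpWord q w) := by
  induction w using List.reverseRecOn with
  | nil => rw [MpWord_nil, MpWord_nil, Mp_single_nil]
  | append_singleton w i ih =>
    simp only [MpWord_concat, Mp_sum, Mp_appendLetter, ih, kP_bind₁ p q hp, shuffle_sum_right,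
      appendLetter_sum, Mp_shuffle, shuffle_assoc]
    exact Finset.sum_comm

end Composition

theorem Mp_comp_general (d m s : ℕ) (p : PolyMap d m) (q : PolyMap m s)
    (hp : ∀ i, MvPolynomial.eval (0 : Fin d → ℝ) (p i) = 0) :
    ∀ x : Tens s, Mp (fun l => MvPolynomial.bind₁ p (q l)) x = Mp p (Mp q x) := by
  intro x
  induction x using Finsupp.induction_linear with
  | zero => simp
  | add x y hx hy => simp [hx, hy]
  | single w c => rw [Mp_single, Mp_single, Mp_smul, MpWord_bind₁ p q hp]

/-- For polynomial maps `p : ℝ^d → ℝ^m` and `q : ℝ^m → ℝ^s` with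
`p(0) = 0` and `q(0) = 0`, `M_{q∘p} = M_p ∘ M_q` as linear maps `T(ℝ^s) → T(ℝ^d)`. -/
theorem Mp_comp (d m s : ℕ) (p : PolyMap d m) (q : PolyMap m s)
    (hp : ∀ i, MvPolynomial.eval (0 : Fin d → ℝ) (p i) = 0)
    (hq : ∀ i, MvPolynomial.eval (0 : Fin m → ℝ) (q i) = 0) :
    ∀ x : Tens s, Mp (fun l => MvPolynomial.bind₁ p (q l)) x = Mp p (Mp q x) :=
  Mp_comp_general d m s p q hp

end SigPaper
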